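/- Let (X,φ) be a Smale space and let x ∈ X be an asymptotic p-periodic point for some p ∈ ℤ with p ≠ 0. Then: (i) the limit η^s(x) := lim_{k→∞} φ^{|p|k}(x) exists, belongs to ω(x), and satisfies φ^p(η^s(x)) = η^s(x); (ii) the limit η^u(x) := lim_{k→∞} φ^{−|p|k}(x) exists, belongs to α(x), and satisfies φ^p(η^u(x)) = η^u(x). -/

import Mathlib

open Filter Set Topology

noncomputable section

/-- Integer iterate of a homeomorphism. -/
def hIter {X : Type*} [TopologicalSpace X] (φ : X ≃ₜ X) (n : ℤ) (x : X) : X :=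
  ((φ.toEquiv : Equiv.Perm X) ^ n) x

/-- The cocycle sums `f^n` of a function `f : X → ℤ` along the iterates of `φ`:
`f^n(x) = Σ_{i=0}^{n-1} f(φ^i(x))` for `n > 0`, `f^0 = 0`, and
`f^n(x) = −Σ_{i=n}^{-1} f(φ^i(x))` for `n < 0`. -/
def cSum {X : Type*} [TopologicalSpace X] (φ : X ≃ₜ X) (f : X → ℤ) (n : ℤ) (x : X) : ℤ :=
  if 0 ≤ n then ∑ i ∈ Finset.range n.toNat, f (hIter φ i x)
  else -∑ i ∈ Finset.range (-n).toNat, f (hIter φ (n + i) x)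

/-- Stable asymptotic pairs (limit definition). -/
def asympS {X : Type*} [MetricSpace X] (φ : X ≃ₜ X) : Set (X × X) :=
  {p | Tendsto (fun n : ℕ => dist (hIter φ n p.1) (hIter φ n p.2)) atTop (nhds 0)}

/-- Unstable asymptotic pairs (limit definition). -/
def asympU {X : Type*} [MetricSpace X] (φ : X ≃ₜ X) : Set (X × X) :=
  {p | Tendsto (fun n : ℕ => dist (hIter φ (-(n : ℤ)) p.1) (hIter φ (-(n : ℤ)) p.2))
    atTop (nhds 0)}

/-- Asymptotic pairs (limit definition). -/
def asympA {X : Type*} [MetricSpace X] (φ : X ≃ₜ X) : Set (X × X) := asympS φ ∩ asympU φ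

/-- The `ω`-limit set of `x`. -/
def omegaSet {X : Type*} [MetricSpace X] (φ : X ≃ₜ X) (x : X) : Set X :=
  {z | ∃ n : ℕ → ℕ, StrictMono n ∧ Tendsto (fun i => hIter φ (n i) x) atTop (nhds z)}

/-- The `α`-limit set of `x`. -/
def alphaSet {X : Type*} [MetricSpace X] (φ : X ≃ₜ X) (x : X) : Set X :=
  {z | ∃ n : ℕ → ℤ, StrictAnti n ∧ Tendsto (fun i => hIter φ (n i) x) atTop (nhds z)}

/-- A Smale space structure on a compact metric space `X`. -/
structure SmaleSpace (X : Type*) [MetricSpace X] [CompactSpace X] where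
  phi : X ≃ₜ X
  eps : ℝ
  lam : ℝ
  br : X → X → X
  eps_pos : 0 < eps
  lam_pos : 0 < lam
  lam_lt_one : lam < 1
  br_cont : ContinuousOn (fun p : X × X => br p.1 p.2) {p : X × X | dist p.1 p.2 < eps}
  br_self : ∀ x : X, br x x = x
  br_assoc_left : ∀ x y z : X, dist x y < eps → dist (br x y) z < eps → dist x z < eps →
    br (br x y) z = br x z
  br_assoc_right : ∀ x y z : X, dist y z < eps → dist x (br y z) < eps → dist x z < eps →
    br x (br y z) = br x z
  phi_br : ∀ x y : X, dist x y < eps → dist (phi x) (phi y) < eps →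
    phi (br x y) = br (phi x) (phi y)
  contract_s : ∀ x y z : X, br y x = y → dist x y < eps → br z x = z → dist x z < eps →
    dist (phi y) (phi z) ≤ lam * dist y z
  contract_u : ∀ x y z : X, br x y = y → dist x y < eps → br x z = z → dist x z < eps →
    dist (phi.symm y) (phi.symm z) ≤ lam * dist y z

namespace SmaleSpace

variable {X Y : Type*} [MetricSpace X] [CompactSpace X] [MetricSpace Y] [CompactSpace Y]

/-- Local stable set `X^s(x,ε)`. -/
def Xs (S : SmaleSpace X) (x : X) (ε : ℝ) : Set X := {y | S.br y x = y ∧ dist x y < ε}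

/-- Local unstable set `X^u(x,ε)`. -/
def Xu (S : SmaleSpace X) (x : X) (ε : ℝ) : Set X := {y | S.br x y = y ∧ dist x y < ε}

def Gs0 (S : SmaleSpace X) : Set (X × X) := {p | p.2 ∈ S.Xs p.1 S.eps}

def Gu0 (S : SmaleSpace X) : Set (X × X) := {p | p.2 ∈ S.Xu p.1 S.eps}

/-- `G_φ^{s,n} = (φ×φ)^{-n}(G_φ^{s,0})`. -/
def GsN (S : SmaleSpace X) (n : ℤ) : Set (X × X) :=
  {p | (hIter S.phi n p.1, hIter S.phi n p.2) ∈ S.Gs0}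

/-- `G_φ^{u,n} = (φ×φ)^{n}(G_φ^{u,0})`. -/
def GuN (S : SmaleSpace X) (n : ℤ) : Set (X × X) :=
  {p | (hIter S.phi (-n) p.1, hIter S.phi (-n) p.2) ∈ S.Gu0}

def GaN (S : SmaleSpace X) (n : ℤ) : Set (X × X) := S.GsN n ∩ S.GuN n

/-- The asymptotic equivalence relation `G_φ^a = ⋃_{n ≥ 0} G_φ^{a,n}`. -/
def Ga (S : SmaleSpace X) : Set (X × X) := ⋃ n : ℕ, S.GaN n

lemma gaN_subset_ga (S : SmaleSpace X) (n : ℕ) : S.GaN n ⊆ S.Ga :=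
  Set.subset_iUnion (fun k : ℕ => S.GaN k) n

/-- The inductive limit topology on `G_φ^a`: a set is open iff its intersection with each
`G_φ^{a,n}` is open in the subspace topology from `X × X`. -/
def gaTopology (S : SmaleSpace X) : TopologicalSpace ↥S.Ga :=
  ⨆ n : ℕ, TopologicalSpace.coinduced (Set.inclusion (S.gaN_subset_ga n)) inferInstance

/-- Irreducibility of a Smale space. -/
def Irreducible (S : SmaleSpace X) : Prop :=
  ∀ U V : Set X, IsOpen U → U.Nonempty → IsOpen V → V.Nonempty →
    ∃ K : ℕ, ((hIter S.phi K '' U) ∩ V).Nonempty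

def IsPeriodicPoint (S : SmaleSpace X) (x : X) : Prop :=
  ∃ p : ℕ, 0 < p ∧ hIter S.phi p x = x

/-- `h` is a flip conjugacy between `(X,φ)` and `(Y,ψ)`. -/
def IsFlipConjugacy (S : SmaleSpace X) (T : SmaleSpace Y) (h : X ≃ₜ Y) : Prop :=
  (∀ x, h (S.phi x) = T.phi (h x)) ∨ (∀ x, h (S.phi x) = T.phi.symm (h x))

def FlipConjugate (S : SmaleSpace X) (T : SmaleSpace Y) : Prop :=
  ∃ h : X ≃ₜ Y, IsFlipConjugacy S T h

/-- An isomorphism of the principal étale groupoids `G_φ^a` and `G_ψ^a`: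
a bijection which is a homeomorphism for the inductive limit topologies and preserves
the (equivalence relation) groupoid structure. -/
structure GaIso (S : SmaleSpace X) (T : SmaleSpace Y) where
  toEquiv : ↥S.Ga ≃ ↥T.Ga
  cont : @Continuous _ _ S.gaTopology T.gaTopology toEquiv
  cont_symm : @Continuous _ _ T.gaTopology S.gaTopology toEquiv.symm
  map_mul : ∀ p q r : ↥S.Ga, (p : X × X).2 = (q : X × X).1 →
    (r : X × X) = ((p : X × X).1, (q : X × X).2) →
    (toEquiv p : Y × Y).2 = (toEquiv q : Y × Y).1 ∧
      (toEquiv r : Y × Y) = ((toEquiv p : Y × Y).1, (toEquiv q : Y × Y).2)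

end SmaleSpace

/-!
Write `q = |p|`. Since `φ^q x` is asymptotic to `x`, for large `N` the forward orbits of
`φ^N x` and `φ^{N+q} x` stay uniformly close. The bracket of two such points lies on the local
unstable set of the first and shadows its forward orbit, hence equals it; so the two points lie on
a common local stable set and `d(φ^n x, φ^{n+q} x)` decays geometrically. Therefore
`φ^{qk} x` is Cauchy, and by continuity its limit is fixed by `φ^q`. The unstable half is the
stable half for the reversed Smale space `(X, φ⁻¹)`.
-/

section HIter

variable {X : Type*} [TopologicalSpace X] (φ : X ≃ₜ X)

lemma hIter_eq_coe_zpow (n : ℤ) : hIter φ n = ⇑(φ ^ n) := by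
  let toPerm : (X ≃ₜ X) →* Equiv.Perm X := ⟨⟨Homeomorph.toEquiv, rfl⟩, fun _ _ => rfl⟩
  exact congrArg DFunLike.coe (map_zpow toPerm φ n).symm

lemma hIter_add (m n : ℤ) (x : X) : hIter φ (m + n) x = hIter φ m (hIter φ n x) := by
  simp only [hIter_eq_coe_zpow, zpow_add, Homeomorph.mul_apply]

lemma hIter_comm (m n : ℤ) (x : X) : hIter φ m (hIter φ n x) = hIter φ n (hIter φ m x) := by
  rw [← hIter_add, ← hIter_add, add_comm]

lemma hIter_zero (x : X) : hIter φ 0 x = x := rfl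

lemma hIter_natCast (n : ℕ) : hIter φ n = (⇑φ)^[n] := by
  rw [hIter_eq_coe_zpow, zpow_natCast]
  induction n with
  | zero => rfl
  | succ n ih => rw [pow_succ', Function.iterate_succ', ← ih]; rfl

lemma hIter_natCast_succ (n : ℕ) (x : X) : hIter φ (n + 1 : ℕ) x = φ (hIter φ n x) := by
  rw [hIter_natCast, hIter_natCast, Function.iterate_succ_apply']

lemma hIter_symm (n : ℤ) (x : X) : hIter φ.symm n x = hIter φ (-n) x := by
  rw [hIter_eq_coe_zpow, hIter_eq_coe_zpow, zpow_neg, ← inv_zpow]; rfl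

lemma continuous_hIter (n : ℤ) : Continuous (hIter φ n) := by
  rw [hIter_eq_coe_zpow]; exact (φ ^ n).continuous

lemma hIter_mul_natCast (q : ℤ) (k : ℕ) : hIter φ (q * k) = (hIter φ q)^[k] := by
  rw [hIter_eq_coe_zpow, hIter_eq_coe_zpow, zpow_mul, zpow_natCast]
  induction k with
  | zero => rfl
  | succ n ih => rw [pow_succ', Function.iterate_succ', ← ih]; rfl

lemma hIter_neg_eq_self_iff {n : ℤ} {x : X} : hIter φ (-n) x = x ↔ hIter φ n x = x := by
  rw [hIter_eq_coe_zpow, hIter_eq_coe_zpow, zpow_neg, Homeomorph.inv_apply,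
    Homeomorph.symm_apply_eq, eq_comm]

lemma hIter_abs_eq_self_iff {n : ℤ} {x : X} : hIter φ |n| x = x ↔ hIter φ n x = x := by
  rcases abs_choice n with h | h <;> rw [h]
  exact hIter_neg_eq_self_iff φ

end HIter

section Asymp

variable {X : Type*} [MetricSpace X] {φ : X ≃ₜ X} {a b : X}

lemma mem_asympS_iff_tendsto_int : (a, b) ∈ asympS φ ↔
    Tendsto (fun n : ℤ => dist (hIter φ n a) (hIter φ n b)) atTop (𝓝 0) := by
  rw [← Nat.map_cast_int_atTop, tendsto_map'_iff]; rfl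

lemma asympS_swap (h : (a, b) ∈ asympS φ) : (b, a) ∈ asympS φ := by
  simpa only [asympS, mem_ofPred_eq, dist_comm] using h

lemma hIter_mem_asympS (h : (a, b) ∈ asympS φ) (m : ℤ) :
    (hIter φ m a, hIter φ m b) ∈ asympS φ := by
  rw [mem_asympS_iff_tendsto_int] at h ⊢
  simpa only [← hIter_add, Function.comp_def, id] using
    h.comp (tendsto_atTop_add_const_right atTop m tendsto_id)

lemma asympS_abs {p : ℤ} {x : X} (h : (hIter φ p x, x) ∈ asympS φ) :
    (hIter φ |p| x, x) ∈ asympS φ := by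
  rcases abs_choice p with hp | hp <;> rw [hp]
  · exact h
  · simpa only [← hIter_add, neg_add_cancel, hIter_zero] using
      asympS_swap (hIter_mem_asympS h (-p))

lemma asympU_eq : asympU φ = asympS φ.symm := by
  ext; simp [asympU, asympS, hIter_symm]

end Asymp

section OrbitLimits

variable {X : Type*} [MetricSpace X] {φ : X ≃ₜ X} {x y : X} {p : ℤ}

lemma mem_omegaSet_of_tendsto (hp : p ≠ 0)
    (h : Tendsto (fun k : ℕ => hIter φ (|p| * k) x) atTop (𝓝 y)) : y ∈ omegaSet φ x :=
  ⟨fun k => p.natAbs * k, strictMono_mul_left_of_pos (Int.natAbs_pos.2 hp),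
    by simpa only [Nat.cast_mul, Int.natCast_natAbs] using h⟩

lemma mem_alphaSet_of_tendsto (hp : p ≠ 0)
    (h : Tendsto (fun k : ℕ => hIter φ (-(|p| * k)) x) atTop (𝓝 y)) : y ∈ alphaSet φ x :=
  ⟨fun k => -(|p| * k), fun _ _ hij => neg_lt_neg <|
    mul_lt_mul_of_pos_left (Nat.cast_lt.2 hij) (abs_pos.2 hp), h⟩

end OrbitLimits

namespace SmaleSpace

variable {X : Type*} [MetricSpace X] [CompactSpace X] (S : SmaleSpace X)

/-- The reversed Smale space `(X, φ⁻¹)`; swapping the bracket exchanges `Xs` and `Xu`. -/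
def symm : SmaleSpace X where
  phi := S.phi.symm
  eps := S.eps
  lam := S.lam
  br x y := S.br y x
  eps_pos := S.eps_pos
  lam_pos := S.lam_pos
  lam_lt_one := S.lam_lt_one
  br_cont := S.br_cont.comp continuous_swap.continuousOn
    fun _ hp => by simpa [dist_comm] using hp
  br_self := S.br_self
  br_assoc_left x y z h₁ h₂ h₃ := S.br_assoc_right z y x
    (by rwa [dist_comm]) (by rwa [dist_comm]) (by rwa [dist_comm])
  br_assoc_right x y z h₁ h₂ h₃ := S.br_assoc_left z y x
    (by rwa [dist_comm]) (by rwa [dist_comm]) (by rwa [dist_comm])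
  phi_br x y h₁ h₂ := S.phi.injective <| by
    simpa using (S.phi_br (S.phi.symm y) (S.phi.symm x) (by rwa [dist_comm])
      (by simpa [dist_comm] using h₁)).symm
  contract_s := S.contract_u
  contract_u x y z h₁ h₂ h₃ h₄ := by simpa using S.contract_s x y z h₁ h₂ h₃ h₄

@[simp] lemma symm_phi : S.symm.phi = S.phi.symm := rfl

variable {S}

lemma phi_mem_Xs {y z : X} (h : z ∈ S.Xs y S.eps) (hd : dist (S.phi y) (S.phi z) < S.eps) :
    S.phi z ∈ S.Xs (S.phi y) S.eps := by
  refine ⟨?_, hd⟩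
  rw [← S.phi_br z y (by rw [dist_comm]; exact h.2) (by rwa [dist_comm]), h.1]

lemma phi_mem_Xu {x y : X} (h : y ∈ S.Xu x S.eps) (hd : dist (S.phi x) (S.phi y) < S.eps) :
    S.phi y ∈ S.Xu (S.phi x) S.eps := by
  refine ⟨?_, hd⟩
  rw [← S.phi_br x y h.2 hd, h.1]

lemma hIter_mem_Xs_and_dist_le {y z : X} (h : z ∈ S.Xs y S.eps) (n : ℕ) :
    hIter S.phi n z ∈ S.Xs (hIter S.phi n y) S.eps ∧
      dist (hIter S.phi n y) (hIter S.phi n z) ≤ S.lam ^ n * dist y z := by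
  induction n with
  | zero => simpa [hIter_zero] using h
  | succ n ih =>
    obtain ⟨hmem, hdist⟩ := ih
    have hcontract : dist (S.phi (hIter S.phi n y)) (S.phi (hIter S.phi n z)) ≤
        S.lam * dist (hIter S.phi n y) (hIter S.phi n z) :=
      S.contract_s _ _ _ (S.br_self _) (by simpa using S.eps_pos) hmem.1 hmem.2
    rw [hIter_natCast_succ, hIter_natCast_succ, pow_succ', mul_assoc]
    refine ⟨S.phi_mem_Xs hmem ?_, hcontract.trans (by gcongr; exact S.lam_pos.le)⟩
    exact hcontract.trans_lt
      ((mul_le_of_le_one_left dist_nonneg S.lam_lt_one.le).trans_lt hmem.2)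

lemma dist_hIter_neg_le_of_mem_Xu {y z : X} (h : z ∈ S.Xu y S.eps) (n : ℕ) :
    dist (hIter S.phi (-n) y) (hIter S.phi (-n) z) ≤ S.lam ^ n * dist y z := by
  have := (S.symm.hIter_mem_Xs_and_dist_le h n).2
  simp only [symm_phi, hIter_symm] at this
  exact this

lemma hIter_mem_Xu {x y : X} (h : y ∈ S.Xu x S.eps)
    (hd : ∀ n : ℕ, dist (hIter S.phi n x) (hIter S.phi n y) < S.eps) (n : ℕ) :
    hIter S.phi n y ∈ S.Xu (hIter S.phi n x) S.eps := by
  induction n with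
  | zero => simpa [hIter_zero] using h
  | succ n ih =>
    rw [hIter_natCast_succ, hIter_natCast_succ]
    exact S.phi_mem_Xu ih (by simpa only [hIter_natCast_succ] using hd (n + 1))

lemma eq_of_mem_Xu_of_forall_dist_lt {x y : X} (h : y ∈ S.Xu x S.eps)
    (hd : ∀ n : ℕ, dist (hIter S.phi n x) (hIter S.phi n y) < S.eps) : y = x := by
  have hle : ∀ n : ℕ, dist x y ≤ S.lam ^ n * S.eps := fun n => by
    have := S.dist_hIter_neg_le_of_mem_Xu (S.hIter_mem_Xu h hd n) n
    rw [← hIter_add, ← hIter_add, neg_add_cancel, hIter_zero, hIter_zero] at this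
    exact this.trans (mul_le_mul_of_nonneg_left (hd n).le (pow_nonneg S.lam_pos.le n))
  have hlim : Tendsto (fun n : ℕ => S.lam ^ n * S.eps) atTop (𝓝 0) := by
    simpa using (tendsto_pow_atTop_nhds_zero_of_lt_one S.lam_pos.le S.lam_lt_one).mul_const
      S.eps
  exact (dist_le_zero.1 (ge_of_tendsto' hlim hle)).symm

variable (S)

lemma exists_dist_br_lt {δ : ℝ} (hδ : 0 < δ) :
    ∃ ε > 0, ∀ x y : X, dist x y < ε →
      dist (S.br x y) x < δ ∧ dist (S.br x y) y < δ := by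
  set K : Set (X × X) := {p | dist p.1 p.2 ≤ S.eps / 2}
  have hK : IsCompact K :=
    (isClosed_le (continuous_fst.dist continuous_snd) continuous_const).isCompact
  have hcont : ContinuousOn (fun p : X × X => S.br p.1 p.2) K :=
    S.br_cont.mono fun p hp => lt_of_le_of_lt hp (half_lt_self S.eps_pos)
  obtain ⟨η, hη, hunif⟩ :=
    Metric.uniformContinuousOn_iff.1 (hK.uniformContinuousOn_of_continuous hcont) δ hδ
  have hdiag : ∀ a : X, (a, a) ∈ K := fun a => show dist a a ≤ S.eps / 2 by
    rw [dist_self]; exact (half_pos S.eps_pos).le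
  refine ⟨min η (S.eps / 2), lt_min hη (half_pos S.eps_pos), fun x y hxy => ?_⟩
  have hxyK : (x, y) ∈ K := hxy.le.trans (min_le_right _ _)
  have hxyη : dist x y < η := hxy.trans_le (min_le_left _ _)
  constructor
  · simpa [S.br_self] using hunif _ hxyK _ (hdiag x)
      (by rwa [Prod.dist_eq, dist_self, max_eq_right dist_nonneg, dist_comm])
  · simpa [S.br_self] using hunif _ hxyK _ (hdiag y)
      (by rwa [Prod.dist_eq, dist_self, max_eq_left dist_nonneg])

/-- The bracket `[x, y]` lies on the local unstable set of `x` and its forward orbit shadows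
that of `x`, so it equals `x`. -/
lemma exists_mem_Xs_of_forall_dist_lt :
    ∃ ε > 0, ∀ x y : X, (∀ n : ℕ, dist (hIter S.phi n x) (hIter S.phi n y) < ε) →
      x ∈ S.Xs y S.eps := by
  have heps := S.eps_pos
  obtain ⟨ε, hε, hbr⟩ := S.exists_dist_br_lt (δ := S.eps / 3) (by linarith)
  refine ⟨min ε (S.eps / 3), lt_min hε (by linarith), fun x y hd => ?_⟩
  have hd' : ∀ n : ℕ, dist (hIter S.phi n x) (hIter S.phi n y) < S.eps / 3 :=
    fun n => (hd n).trans_le (min_le_right _ _)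
  have hxy0 : dist x y < min ε (S.eps / 3) := hd 0
  have hxy : dist x y < S.eps := (hd' 0).trans (by linarith)
  obtain ⟨hwx, hwy⟩ := hbr x y (hxy0.trans_le (min_le_left _ _))
  set w := S.br x y with hw
  have hws : w ∈ S.Xs y S.eps :=
    ⟨S.br_assoc_left x y y hxy (by linarith) hxy, by rw [dist_comm]; linarith⟩
  have hwu : w ∈ S.Xu x S.eps :=
    ⟨S.br_assoc_right x x y hxy (by rw [dist_comm]; linarith) hxy, by rw [dist_comm]; linarith⟩
  have horbit : ∀ n : ℕ, dist (hIter S.phi n x) (hIter S.phi n w) < S.eps := fun n =>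
    calc dist (hIter S.phi n x) (hIter S.phi n w)
        ≤ dist (hIter S.phi n x) (hIter S.phi n y) + dist (hIter S.phi n y) (hIter S.phi n w) :=
          dist_triangle _ _ _
      _ ≤ dist (hIter S.phi n x) (hIter S.phi n y) + dist y w := by
          gcongr
          exact (S.hIter_mem_Xs_and_dist_le hws n).2.trans
            (mul_le_of_le_one_left dist_nonneg (pow_le_one₀ S.lam_pos.le S.lam_lt_one.le))
      _ < S.eps := by rw [dist_comm] at hwy; linarith [hd' n]
  refine ⟨?_, by rwa [dist_comm]⟩
  rw [← hw, S.eq_of_mem_Xu_of_forall_dist_lt hwu horbit]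

variable {S}

lemma exists_tendsto_iterate_of_mem_Xs {q : ℕ} (hq : 0 < q) {z : X}
    (h : hIter S.phi q z ∈ S.Xs z S.eps) :
    ∃ y, Tendsto (fun k => (hIter S.phi q)^[k] z) atTop (𝓝 y) := by
  have hstep : ∀ k : ℕ, dist ((hIter S.phi q)^[k] z) ((hIter S.phi q)^[k + 1] z) ≤
      S.eps * S.lam ^ k := fun k => by
    rw [Function.iterate_succ_apply, ← hIter_mul_natCast, ← Nat.cast_mul]
    calc dist (hIter S.phi (q * k : ℕ) z) (hIter S.phi (q * k : ℕ) (hIter S.phi q z))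
        ≤ S.lam ^ (q * k) * dist z (hIter S.phi q z) := (S.hIter_mem_Xs_and_dist_le h _).2
      _ ≤ S.lam ^ k * S.eps := mul_le_mul
          (pow_le_pow_of_le_one S.lam_pos.le S.lam_lt_one.le (Nat.le_mul_of_pos_left k hq))
          h.2.le dist_nonneg (pow_nonneg S.lam_pos.le k)
      _ = S.eps * S.lam ^ k := mul_comm _ _
  exact cauchySeq_tendsto_of_complete (cauchySeq_of_le_geometric S.lam S.eps S.lam_lt_one hstep)

lemma exists_tendsto_iterate_of_mem_asympS {q : ℕ} (hq : 0 < q) {x : X}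
    (h : (hIter S.phi q x, x) ∈ asympS S.phi) :
    ∃ y, Tendsto (fun k => (hIter S.phi q)^[k] x) atTop (𝓝 y) ∧ hIter S.phi q y = y := by
  obtain ⟨ε, hε, hstable⟩ := S.exists_mem_Xs_of_forall_dist_lt
  obtain ⟨N, hN⟩ := eventually_atTop.1 (h.eventually (gt_mem_nhds hε))
  set z := hIter S.phi N x
  have hz : hIter S.phi q z ∈ S.Xs z S.eps := hstable _ _ fun n => by
    have hshift (a : X) : hIter S.phi n (hIter S.phi N a) = hIter S.phi (n + N : ℕ) a := by
      rw [← hIter_add, Nat.cast_add]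
    have := hN (n + N) (Nat.le_add_left N n)
    dsimp only at this
    rwa [← hshift, ← hshift, hIter_comm S.phi N q] at this
  obtain ⟨y, hy⟩ := exists_tendsto_iterate_of_mem_Xs hq hz
  have hx : ∀ k : ℕ, (hIter S.phi q)^[k] x = hIter S.phi (-N) ((hIter S.phi q)^[k] z) := by
    intro k
    simp only [z, ← hIter_mul_natCast, ← hIter_add]
    congr 1; ring
  have hlim : Tendsto (fun k => (hIter S.phi q)^[k] x) atTop (𝓝 (hIter S.phi (-N) y)) := by
    simpa only [hx, Function.comp_def] using ((continuous_hIter _ _).tendsto _).comp hy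
  exact ⟨_, hlim, isFixedPt_of_tendsto_iterate hlim (continuous_hIter _ _).continuousAt⟩

lemma exists_tendsto_hIter_abs_mul {p : ℤ} (hp : p ≠ 0) {x : X}
    (h : (hIter S.phi p x, x) ∈ asympS S.phi) :
    ∃ y, Tendsto (fun k : ℕ => hIter S.phi (|p| * k) x) atTop (𝓝 y) ∧
      hIter S.phi p y = y := by
  have habs : ((p.natAbs : ℕ) : ℤ) = |p| := Int.natCast_natAbs p
  obtain ⟨y, hy, hfix⟩ := exists_tendsto_iterate_of_mem_asympS (Int.natAbs_pos.2 hp)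
    (by rw [habs]; exact asympS_abs h)
  refine ⟨y, ?_, ?_⟩
  · simpa only [habs, ← hIter_mul_natCast] using hy
  · rwa [habs, hIter_abs_eq_self_iff] at hfix

end SmaleSpace

/-- For an asymptotic `p`-periodic point `x` of a Smale space, the limits
`η^s(x) = lim_k φ^{|p|k}(x)` and `η^u(x) = lim_k φ^{-|p|k}(x)` exist, belong to `ω(x)`
resp. `α(x)`, and are fixed by `φ^p`. -/
theorem etaS_etaU_exist {X : Type*} [MetricSpace X] [CompactSpace X] (S : SmaleSpace X)
    (x : X) (p : ℤ) (hp : p ≠ 0) (hx : (hIter S.phi p x, x) ∈ asympA S.phi) :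
    (∃ ys : X, Tendsto (fun k : ℕ => hIter S.phi (|p| * k) x) atTop (nhds ys) ∧
      ys ∈ omegaSet S.phi x ∧ hIter S.phi p ys = ys) ∧
    (∃ yu : X, Tendsto (fun k : ℕ => hIter S.phi (-(|p| * k)) x) atTop (nhds yu) ∧
      yu ∈ alphaSet S.phi x ∧ hIter S.phi p yu = yu) := by
  obtain ⟨hs, hu⟩ := hx
  obtain ⟨ys, hys, hys_fix⟩ := S.exists_tendsto_hIter_abs_mul hp hs
  rw [asympU_eq, show hIter S.phi p x = hIter S.phi.symm (-p) x by rw [hIter_symm, neg_neg]] at hu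
  obtain ⟨yu, hyu, hyu_fix⟩ := S.symm.exists_tendsto_hIter_abs_mul (neg_ne_zero.2 hp) hu
  simp only [SmaleSpace.symm_phi, hIter_symm, abs_neg, hIter_neg_eq_self_iff] at hyu hyu_fix
  exact ⟨⟨ys, hys, mem_omegaSet_of_tendsto hp hys, hys_fix⟩,
    ⟨yu, hyu, mem_alphaSet_of_tendsto hp hyu, hyu_fix⟩⟩
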